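/- Let n ≥ 2 and p > 1. If Φ : P^n_o → C_p(R^n) is a simple GL(n)-covariant valuation which is continuous at the line segment [o, e₁], then Φ = 0. -/

import Mathlib

open MeasureTheory Metric
open scoped RealInnerProductSpace Pointwise

noncomputable section

/-- Euclidean `n`-space. -/
abbrev Eucl (n : ℕ) : Type := EuclideanSpace ℝ (Fin n)

/-- A convex body: a nonempty compact convex subset of `ℝⁿ`. -/
def IsConvexBody {n : ℕ} (K : Set (Eucl n)) : Prop :=
  K.Nonempty ∧ IsCompact K ∧ Convex ℝ K

/-- A convex body containing the origin. -/
def IsConvexBodyO {n : ℕ} (K : Set (Eucl n)) : Prop :=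
  IsConvexBody K ∧ (0 : Eucl n) ∈ K

/-- A convex polytope: the convex hull of a finite nonempty set of points. -/
def IsPolytope {n : ℕ} (P : Set (Eucl n)) : Prop :=
  ∃ S : Finset (Eucl n), S.Nonempty ∧ P = convexHull ℝ (S : Set (Eucl n))

/-- A convex polytope containing the origin. -/
def IsPolytopeO {n : ℕ} (P : Set (Eucl n)) : Prop :=
  IsPolytope P ∧ (0 : Eucl n) ∈ P

/-- The support function `h(K, u) = sup_{x ∈ K} ⟨x, u⟩`. -/
def suppFn {n : ℕ} (K : Set (Eucl n)) (u : Eucl n) : ℝ :=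
  sSup ((fun x => ⟪x, u⟫) '' K)

/-- The dimension of a convex set: the dimension of its affine hull. -/
def setDim {n : ℕ} (P : Set (Eucl n)) : ℕ :=
  Module.finrank ℝ (affineSpan ℝ P).direction

/-- `h(I_p⁺ K, u)^p = max_{x ∈ K} ⟨x, u⟩₊^p`. -/
def IppF {n : ℕ} (p : ℝ) (K : Set (Eucl n)) (u : Eucl n) : ℝ :=
  sSup ((fun x => (max ⟪x, u⟫ 0) ^ p) '' K)

/-- `h(I_p⁻ K, u)^p = max_{x ∈ K} ⟨x, u⟩₋^p`. -/
def ImpF {n : ℕ} (p : ℝ) (K : Set (Eucl n)) (u : Eucl n) : ℝ :=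
  sSup ((fun x => (max (-⟪x, u⟫) 0) ^ p) '' K)

/-- `(J_p⁺ K)(u) = min_{x ∈ K} ⟨x, u⟩₊^p`. -/
def JppF {n : ℕ} (p : ℝ) (K : Set (Eucl n)) (u : Eucl n) : ℝ :=
  sInf ((fun x => (max ⟪x, u⟫ 0) ^ p) '' K)

/-- `(J_p⁻ K)(u) = min_{x ∈ K} ⟨x, u⟩₋^p`. -/
def JmpF {n : ℕ} (p : ℝ) (K : Set (Eucl n)) (u : Eucl n) : ℝ :=
  sInf ((fun x => (max (-⟪x, u⟫) 0) ^ p) '' K)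

/-- The face `F(K, v) = {x ∈ K : ⟨x, v⟩ = h(K, v)}`. -/
def face {n : ℕ} (K : Set (Eucl n)) (v : Eucl n) : Set (Eucl n) :=
  {x ∈ K | ⟪x, v⟫ = suppFn K v}

/-- `h(E_p⁺ K, u)^p = (1/2) Σ_{v ∈ S¹, h(K,v) = 0} max_{x ∈ F(K,v)} ⟨x, u⟩₊^p`. -/
def EppF {n : ℕ} (p : ℝ) (K : Set (Eucl n)) (u : Eucl n) : ℝ :=
  (1 / 2) * ∑' v : {v : Eucl n // ‖v‖ = 1 ∧ suppFn K v = 0},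
    sSup ((fun x => (max ⟪x, u⟫ 0) ^ p) '' face K v.1)

/-- `h(E_p⁻ K, u)^p = (1/2) Σ_{v ∈ S¹, h(K,v) = 0} max_{x ∈ F(K,v)} ⟨x, u⟩₋^p`. -/
def EmpF {n : ℕ} (p : ℝ) (K : Set (Eucl n)) (u : Eucl n) : ℝ :=
  (1 / 2) * ∑' v : {v : Eucl n // ‖v‖ = 1 ∧ suppFn K v = 0},
    sSup ((fun x => (max (-⟪x, u⟫) 0) ^ p) '' face K v.1)

/-- `(F_p⁺ K)(u) = (1/2) Σ_{v ∈ S¹, h(K,v) = 0} min_{x ∈ F(K,v)} ⟨x, u⟩₊^p`. -/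
def FppF {n : ℕ} (p : ℝ) (K : Set (Eucl n)) (u : Eucl n) : ℝ :=
  (1 / 2) * ∑' v : {v : Eucl n // ‖v‖ = 1 ∧ suppFn K v = 0},
    sInf ((fun x => (max ⟪x, u⟫ 0) ^ p) '' face K v.1)

/-- `(F_p⁻ K)(u) = (1/2) Σ_{v ∈ S¹, h(K,v) = 0} min_{x ∈ F(K,v)} ⟨x, u⟩₋^p`. -/
def FmpF {n : ℕ} (p : ℝ) (K : Set (Eucl n)) (u : Eucl n) : ℝ :=
  (1 / 2) * ∑' v : {v : Eucl n // ‖v‖ = 1 ∧ suppFn K v = 0},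
    sInf ((fun x => (max (-⟪x, u⟫) 0) ^ p) '' face K v.1)

/-- The maximum norm over the unit sphere. -/
def sphSup {n : ℕ} (f : Eucl n → ℝ) : ℝ :=
  ⨆ u : Metric.sphere (0 : Eucl n) 1, |f u.1|

/-- The standard simplex `Tⁿ = conv{o, e₁, …, e_n}`. -/
def stdT (n : ℕ) : Set (Eucl n) :=
  convexHull ℝ (insert (0 : Eucl n) (Set.range fun i : Fin n => EuclideanSpace.single i (1 : ℝ)))

/-- The simplex `T̃ⁿ⁻¹ = conv{e₁, …, e_n}`. -/
def tilT (n : ℕ) : Set (Eucl n) :=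
  convexHull ℝ (Set.range fun i : Fin n => EuclideanSpace.single i (1 : ℝ))

/-!
Cut a polytope `Q ∋ o` by the hyperplane `e₁^⊥`: by the valuation property and simplicity,
`Φ Q e₁` is the sum of its values on the two halves (again polytopes), so up to `x ↦ -x` we
may assume `Q ⊆ {x₁ ≥ 0}`.
With `b = max_Q x₁`, the maps `diag(1/b, s, …, s)` carry `Q` Hausdorff-close to `[o, e₁]` as
`s → 0`, where `Φ` vanishes by simplicity (`n ≥ 2`); by covariance and `p`-homogeneity they only
rescale `Φ Q e₁` by `b^(-p)`, so continuity at `[o, e₁]` forces `Φ Q e₁ = 0`. Reflections and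
homogeneity spread this from `e₁` to every vector.
-/

open Set

section HalfspaceCut

variable {E : Type*} [AddCommGroup E] [Module ℝ E] (f : E →ₗ[ℝ] ℝ)

/-- The point where the line through `a` and `b` meets the hyperplane `f = 0`. -/
def zeroCrossing (a b : E) : E := (f a - f b)⁻¹ • (f a • b - f b • a)

variable {f}

lemma zeroCrossing_comm (a b : E) : zeroCrossing f a b = zeroCrossing f b a := by
  rw [zeroCrossing, zeroCrossing, ← neg_sub (f b), inv_neg, ← neg_sub (f b • a), neg_smul_neg]

lemma zeroCrossing_neg (a b : E) : zeroCrossing (-f) a b = zeroCrossing f a b := by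
  simp only [zeroCrossing, LinearMap.neg_apply, neg_smul, ← neg_sub (f a), inv_neg,
    sub_neg_eq_add, neg_add_eq_sub]
  rw [← smul_neg, neg_sub]

lemma map_zeroCrossing (a b : E) : f (zeroCrossing f a b) = 0 := by
  simp only [zeroCrossing, map_smul, map_sub, smul_eq_mul]
  ring

lemma zeroCrossing_mem_segment {a b : E} (ha : 0 ≤ f a) (hb : f b < 0) :
    zeroCrossing f a b ∈ segment ℝ a b := by
  have hab : 0 < f a - f b := by linarith
  refine ⟨-f b / (f a - f b), f a / (f a - f b), div_nonneg (by linarith) hab.le,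
    div_nonneg ha hab.le, by field_simp; ring, ?_⟩
  simp only [zeroCrossing, smul_sub, smul_smul]
  match_scalars <;> ring

/-- `x ↦ zeroCrossing f x c` is a perspective map, so it sends convex combinations to convex
combinations. -/
lemma zeroCrossing_mem_convexHull_image {A : Set E} {c : E} (hA : ∀ a ∈ A, f c < f a)
    {x : E} (hx : x ∈ convexHull ℝ A) :
    zeroCrossing f x c ∈ convexHull ℝ ((zeroCrossing f · c) '' A) := by
  set C := convexHull ℝ ((zeroCrossing f · c) '' A)
  suffices hconv : Convex ℝ {x | f c < f x ∧ zeroCrossing f x c ∈ C} by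
    refine (convexHull_min (fun a ha => ?_) hconv hx).2
    exact ⟨hA a ha, subset_convexHull ℝ _ (mem_image_of_mem _ ha)⟩
  rintro x ⟨hxc, hx⟩ y ⟨hyc, hy⟩ α β hα hβ hαβ
  set z := α • x + β • y
  have hz : f z - f c = α * (f x - f c) + β * (f y - f c) := by
    simp only [z, map_add, map_smul, smul_eq_mul]
    linear_combination f c * hαβ
  have hzc : 0 < f z - f c := by
    rw [hz]
    rcases hα.eq_or_lt with rfl | hα'
    · rw [zero_add] at hαβ; subst hαβ; linarith
    · nlinarith [mul_nonneg hβ (sub_pos.2 hyc).le]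
  refine ⟨by linarith, ?_⟩
  have hxc' := sub_pos.2 hxc
  have hyc' := sub_pos.2 hyc
  have key := convex_convexHull ℝ _ hx hy
    (div_nonneg (mul_nonneg hα hxc'.le) hzc.le) (div_nonneg (mul_nonneg hβ hyc'.le) hzc.le)
    (by rw [← add_div, ← hz, div_self hzc.ne'])
  convert key using 1
  simp only [z, zeroCrossing, smul_smul, smul_sub, map_add, map_smul, smul_eq_mul] at hz hzc ⊢
  match_scalars <;> field_simp

lemma zeroCrossing_mem_convexHull_image2 {A B : Set E} (hA : ∀ a ∈ A, 0 ≤ f a)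
    (hB : ∀ b ∈ B, f b < 0) {a b : E} (ha : a ∈ convexHull ℝ A) (hb : b ∈ convexHull ℝ B) :
    zeroCrossing f a b ∈ convexHull ℝ (image2 (zeroCrossing f) A B) := by
  have hfa : 0 ≤ f a := convexHull_min hA (convex_halfSpace_ge f.isLinear 0) ha
  have hslice : ∀ b' ∈ B, zeroCrossing f a b' ∈ convexHull ℝ (image2 (zeroCrossing f) A B) :=
    fun b' hb' => convexHull_mono (image_subset_image2_left hb')
      (zeroCrossing_mem_convexHull_image (fun a' ha' => (hB b' hb').trans_le (hA a' ha')) ha)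
  have hneg := zeroCrossing_mem_convexHull_image (f := -f) (c := a)
    (fun b' hb' => neg_lt_neg ((hB b' hb').trans_le hfa)) hb
  simp only [zeroCrossing_neg, zeroCrossing_comm _ a] at hneg
  exact convexHull_min (image_subset_iff.2 hslice) (convex_convexHull ℝ _) hneg

lemma mem_segment_zeroCrossing {a b x : E} (ha : 0 ≤ f a) (hb : f b < 0)
    (hx : x ∈ segment ℝ a b) (hfx : 0 ≤ f x) : x ∈ segment ℝ a (zeroCrossing f a b) := by
  obtain ⟨α, β, hα, hβ, hαβ, rfl⟩ := hx
  simp only [map_add, map_smul, smul_eq_mul] at hfx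
  rcases ha.eq_or_lt with ha0 | ha0
  · obtain rfl : β = 0 := by nlinarith
    simp only [zero_smul, add_zero] at hαβ ⊢
    rw [hαβ, one_smul]
    exact left_mem_segment ℝ _ _
  set ν := β * (f a - f b) / f a
  refine ⟨1 - ν, ν, ?_, div_nonneg (mul_nonneg hβ (by linarith)) ha0.le, by ring, ?_⟩
  · rw [sub_nonneg, div_le_one ha0]
    linear_combination hfx + f a * hαβ
  · simp only [ν, zeroCrossing, smul_sub, smul_smul]
    have : f a - f b ≠ 0 := by linarith
    match_scalars
    · field_simp
      linear_combination (-f a) * hαβ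
    · field_simp

variable (f) in
theorem convexHull_inter_halfSpace (S : Set E) :
    convexHull ℝ S ∩ {x | 0 ≤ f x} = convexHull ℝ ({s ∈ S | 0 ≤ f s} ∪
      image2 (zeroCrossing f) {s ∈ S | 0 ≤ f s} {s ∈ S | f s < 0}) := by
  set A := {s ∈ S | 0 ≤ f s}
  set B := {s ∈ S | f s < 0}
  have hAB : S = A ∪ B := by
    ext s; simp only [A, B, mem_union, mem_sep_iff, ← and_or_left, le_or_gt, and_true]
  apply Subset.antisymm
  · rintro x ⟨hx, hfx : 0 ≤ f x⟩
    rcases B.eq_empty_or_nonempty with hB | hB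
    · rw [hAB, hB, union_empty] at hx
      exact convexHull_mono subset_union_left hx
    rcases A.eq_empty_or_nonempty with hA | hA
    · rw [hAB, hA, empty_union] at hx
      exact absurd (convexHull_min (fun b hb => hb.2) (convex_halfSpace_lt f.isLinear 0) hx)
        hfx.not_gt
    rw [hAB, convexHull_union hA hB] at hx
    obtain ⟨a, ha, b, hb, hxab⟩ := mem_convexJoin.1 hx
    have hfa : 0 ≤ f a := convexHull_min (fun a ha => ha.2) (convex_halfSpace_ge f.isLinear 0) ha
    have hfb : f b < 0 := convexHull_min (fun b hb => hb.2) (convex_halfSpace_lt f.isLinear 0) hb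
    refine (convex_convexHull ℝ _).segment_subset (convexHull_mono subset_union_left ha)
      (convexHull_mono subset_union_right ?_) (mem_segment_zeroCrossing hfa hfb hxab hfx)
    exact zeroCrossing_mem_convexHull_image2 (fun a ha => ha.2) (fun b hb => hb.2) ha hb
  · refine convexHull_min (union_subset (fun a ha => ⟨subset_convexHull ℝ S ha.1, ha.2⟩) ?_)
      ((convex_convexHull ℝ S).inter (convex_halfSpace_ge f.isLinear 0))
    rintro _ ⟨a, ha, b, hb, rfl⟩
    refine ⟨(convex_convexHull ℝ S).segment_subset (subset_convexHull ℝ S ha.1)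
      (subset_convexHull ℝ S hb.1) (zeroCrossing_mem_segment ha.2 hb.2), ?_⟩
    exact (map_zeroCrossing a b).ge

variable (f) in
theorem exists_finite_convexHull_inter_halfSpace {S : Set E} (hS : S.Finite) :
    ∃ T : Set E, T.Finite ∧ convexHull ℝ S ∩ {x | 0 ≤ f x} = convexHull ℝ T :=
  ⟨_, (hS.sep _).union ((hS.sep _).image2 _ (hS.sep _)), convexHull_inter_halfSpace f S⟩

end HalfspaceCut

section Stretch

variable {E : Type*} [NormedAddCommGroup E] [InnerProductSpace ℝ E] {e : E} {a s : ℝ}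

/-- For a unit vector `e`: scaling by `a` along `e` and by `s` on the orthogonal complement. -/
def stretch (e : E) (a s : ℝ) : E →ₗ[ℝ] E :=
  s • LinearMap.id + (a - s) • (innerₛₗ ℝ e).smulRight e

lemma stretch_apply (x : E) : stretch e a s x = s • x + ((a - s) * ⟪e, x⟫) • e := by
  simp [stretch, smul_smul]

lemma stretch_isSymmetric : (stretch e a s).IsSymmetric := by
  intro x y
  simp only [stretch_apply, inner_add_left, inner_add_right, real_inner_smul_left,
    real_inner_smul_right, real_inner_comm e]
  ring

lemma stretch_apply_self (he : ‖e‖ = 1) : stretch e a s e = a • e := by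
  rw [stretch_apply, real_inner_self_eq_norm_sq, he]
  match_scalars
  ring

lemma stretch_comp_stretch (he : ‖e‖ = 1) (a' s' : ℝ) :
    stretch e a s ∘ₗ stretch e a' s' = stretch e (a * a') (s * s') := by
  ext x
  simp only [LinearMap.comp_apply, stretch_apply, map_add, map_smul, real_inner_self_eq_norm_sq,
    he, smul_add, smul_smul]
  match_scalars <;> ring

lemma det_stretch_ne_zero (he : ‖e‖ = 1) (ha : a ≠ 0) (hs : s ≠ 0) :
    LinearMap.det (stretch e a s) ≠ 0 := by
  have hinv := congrArg LinearMap.det (stretch_comp_stretch (a := a) (s := s) he a⁻¹ s⁻¹)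
  rw [LinearMap.det_comp, mul_inv_cancel₀ ha, mul_inv_cancel₀ hs] at hinv
  have hid : stretch e 1 1 = LinearMap.id := by ext x; simp [stretch_apply]
  rw [hid, LinearMap.det_id] at hinv
  exact left_ne_zero_of_mul_eq_one hinv

lemma norm_stretch_sub_le (he : ‖e‖ = 1) (hs : 0 ≤ s) (x : E) :
    ‖stretch e a s x - (a * ⟪e, x⟫) • e‖ ≤ 2 * s * ‖x‖ := by
  have hsub : stretch e a s x - (a * ⟪e, x⟫) • e = s • (x - ⟪e, x⟫ • e) := by
    rw [stretch_apply]
    match_scalars <;> ring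
  have hproj : ‖x - ⟪e, x⟫ • e‖ ≤ 2 * ‖x‖ := calc
    ‖x - ⟪e, x⟫ • e‖ ≤ ‖x‖ + |⟪e, x⟫| * ‖e‖ := by
      simpa [norm_smul] using norm_sub_le x (⟪e, x⟫ • e)
    _ ≤ ‖x‖ + ‖e‖ * ‖x‖ * ‖e‖ := by gcongr; exact abs_real_inner_le_norm e x
    _ = 2 * ‖x‖ := by rw [he]; ring
  rw [hsub, norm_smul, Real.norm_of_nonneg hs]
  linarith [mul_le_mul_of_nonneg_left hproj hs]

lemma hausdorffDist_image_stretch_segment_le {Q : Set E} (hQ : Convex ℝ Q) (h0 : (0 : E) ∈ Q)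
    (he : ‖e‖ = 1) {xb : E} (hxb : xb ∈ Q) (hb : 0 < ⟪e, xb⟫)
    (hbounds : ∀ x ∈ Q, 0 ≤ ⟪e, x⟫ ∧ ⟪e, x⟫ ≤ ⟪e, xb⟫) (hs : 0 ≤ s) {R : ℝ}
    (hR : ∀ x ∈ Q, ‖x‖ ≤ R) :
    Metric.hausdorffDist (stretch e ⟪e, xb⟫⁻¹ s '' Q) (segment ℝ 0 e) ≤ 2 * s * R := by
  have hR0 : 0 ≤ R := (norm_nonneg _).trans (hR 0 h0)
  have hseg : ∀ t ∈ Icc (0 : ℝ) 1, t • e ∈ segment ℝ 0 e := fun t ht => by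
    rw [segment_eq_image' ℝ]
    exact ⟨t, ht, by simp⟩
  have hclose : ∀ x ∈ Q, dist (stretch e ⟪e, xb⟫⁻¹ s x) ((⟪e, xb⟫⁻¹ * ⟪e, x⟫) • e) ≤ 2 * s * R :=
    fun x hx => by
      rw [dist_eq_norm]
      exact (norm_stretch_sub_le he hs x).trans (by gcongr; exact hR x hx)
  apply Metric.hausdorffDist_le_of_mem_dist (by positivity)
  · rintro _ ⟨x, hx, rfl⟩
    refine ⟨_, hseg _ ⟨by have := (hbounds x hx).1; positivity, ?_⟩, hclose x hx⟩
    rw [inv_mul_le_one₀ hb]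
    exact (hbounds x hx).2
  · intro y hy
    rw [segment_eq_image'] at hy
    obtain ⟨t, ht, rfl⟩ := hy
    have htxb := hQ.smul_mem_of_zero_mem h0 hxb ht
    refine ⟨_, ⟨t • xb, htxb, rfl⟩, ?_⟩
    have := hclose _ htxb
    rw [real_inner_smul_right, mul_left_comm, inv_mul_cancel₀ hb.ne', mul_one, dist_comm] at this
    simpa using this

end Stretch

section Polytopes

variable {n : ℕ} {P : Set (Eucl n)}

lemma IsPolytope.isCompact (hP : IsPolytope P) : IsCompact P := by
  obtain ⟨S, -, rfl⟩ := hP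
  exact S.finite_toSet.isCompact_convexHull (𝕜 := ℝ)

lemma IsPolytope.convex (hP : IsPolytope P) : Convex ℝ P := by
  obtain ⟨S, -, rfl⟩ := hP
  exact convex_convexHull ℝ _

lemma IsPolytopeO.image (hP : IsPolytopeO P) (φ : Eucl n →ₗ[ℝ] Eucl n) :
    IsPolytopeO (φ '' P) := by
  classical
  obtain ⟨⟨S, hS, rfl⟩, h0⟩ := hP
  refine ⟨⟨S.image φ, hS.image φ, ?_⟩, ⟨0, h0, map_zero φ⟩⟩
  rw [Finset.coe_image, φ.image_convexHull]

lemma IsPolytopeO.inter_halfSpace (hP : IsPolytopeO P) (v : Eucl n) :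
    IsPolytopeO (P ∩ {x | 0 ≤ ⟪v, x⟫}) := by
  obtain ⟨⟨S, -, rfl⟩, h0⟩ := hP
  obtain ⟨T, hT, hcut⟩ := exists_finite_convexHull_inter_halfSpace (innerₛₗ ℝ v) S.finite_toSet
  simp only [coe_innerₛₗ_apply] at hcut
  have h0' : (0 : Eucl n) ∈ convexHull ℝ S ∩ {x | 0 ≤ ⟪v, x⟫} := ⟨h0, by simp⟩
  refine ⟨⟨hT.toFinset, ?_, by rw [hT.coe_toFinset, hcut]⟩, h0'⟩
  rw [hT.toFinset_nonempty, ← convexHull_nonempty_iff (𝕜 := ℝ), ← hcut]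
  exact ⟨0, h0'⟩

lemma isPolytopeO_segment (v : Eucl n) : IsPolytopeO (segment ℝ 0 v) := by
  classical
  refine ⟨⟨{0, v}, Finset.insert_nonempty _ _, ?_⟩, left_mem_segment ℝ _ _⟩
  rw [Finset.coe_insert, Finset.coe_singleton, convexHull_pair]

lemma setDim_lt_of_subset_orthogonal {v : Eucl n} (hv : v ≠ 0) (hP : P ⊆ (ℝ ∙ v)ᗮ) :
    setDim P < n := by
  have hdir : (affineSpan ℝ P).direction ≤ (ℝ ∙ v)ᗮ := by
    simpa using AffineSubspace.direction_le
      ((affineSpan_le (Q := (ℝ ∙ v)ᗮ.toAffineSubspace)).2 hP)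
  have hne : (ℝ ∙ v)ᗮ ≠ ⊤ := fun h => hv <| inner_self_eq_zero.1 <|
    Submodule.mem_orthogonal_singleton_iff_inner_right.1 (h ▸ Submodule.mem_top)
  exact (Submodule.finrank_mono hdir).trans_lt ((Submodule.finrank_lt hne).trans_eq (by simp))

lemma setDim_segment_lt (hn : 2 ≤ n) (v : Eucl n) : setDim (segment ℝ 0 v) < n := by
  rw [setDim, ← convexHull_pair, affineSpan_convexHull, direction_affineSpan, vectorSpan_pair]
  calc Module.finrank ℝ (ℝ ∙ ((0 : Eucl n) -ᵥ v)) ≤ 1 :=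
        (finrank_span_le_card ({_} : Set (Eucl n))).trans (by simp)
    _ < n := by omega

end Polytopes

section Valuations

variable {n : ℕ} {p : ℝ} {Φ : Set (Eucl n) → Eucl n → ℝ}

lemma abs_le_sphSup {f : Eucl n → ℝ} (hf : Continuous f) {u : Eucl n} (hu : ‖u‖ = 1) :
    |f u| ≤ sphSup f := by
  refine le_ciSup (f := fun v : Metric.sphere (0 : Eucl n) 1 => |f v|) ?_ ⟨u, by simpa using hu⟩
  rw [← image_univ, ← image_image (fun v => |f v|) Subtype.val, image_univ,
    Subtype.range_coe_subtype]
  exact ((isCompact_sphere 0 1).image (continuous_abs.comp hf)).bddAbove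

variable (p Φ) in
def MapsToCp : Prop :=
  ∀ P : Set (Eucl n), IsPolytopeO P → Continuous (Φ P) ∧
    ∀ s : ℝ, 0 < s → ∀ u : Eucl n, Φ P (s • u) = s ^ p * Φ P u

variable (Φ) in
def IsSimple : Prop :=
  ∀ P : Set (Eucl n), IsPolytopeO P → setDim P < n → Φ P = 0

variable (Φ) in
def IsGLCovariant : Prop :=
  ∀ P : Set (Eucl n), IsPolytopeO P → ∀ φ : Eucl n →ₗ[ℝ] Eucl n, LinearMap.det φ ≠ 0 →
    Φ (φ '' P) = Φ P ∘ LinearMap.adjoint φ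

variable (Φ) in
def ContinuousAtSegment (e : Eucl n) : Prop :=
  ∀ ε > (0 : ℝ), ∃ δ > (0 : ℝ), ∀ P : Set (Eucl n), IsPolytopeO P →
    hausdorffDist P (segment ℝ 0 e) < δ →
      sphSup (fun u => Φ P u - Φ (segment ℝ 0 e) u) < ε

lemma MapsToCp.apply_zero (hΦ : MapsToCp p Φ) (hp : 0 < p) {P : Set (Eucl n)}
    (hP : IsPolytopeO P) : Φ P 0 = 0 := by
  have h := (hΦ P hP).2 2 two_pos 0
  rw [smul_zero] at h
  have h2 : 1 < (2 : ℝ) ^ p := Real.one_lt_rpow one_lt_two hp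
  nlinarith

lemma IsGLCovariant.apply_image_isometry (hΦ : IsGLCovariant Φ) (g : Eucl n ≃ₗᵢ[ℝ] Eucl n)
    {P : Set (Eucl n)} (hP : IsPolytopeO P) (u : Eucl n) : Φ (g '' P) (g u) = Φ P u := by
  have h := hΦ P hP g.toLinearEquiv.toLinearMap g.toLinearEquiv.isUnit_det'.ne_zero
  rw [LinearIsometryEquiv.adjoint_toLinearMap_eq_symm] at h
  simpa using congrFun h (g u)

/-- A reflection carries `u` to `e`. -/
lemma IsGLCovariant.apply_eq_zero_of_norm_eq (hΦ : IsGLCovariant Φ) {e : Eucl n}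
    (he : ∀ Q : Set (Eucl n), IsPolytopeO Q → Φ Q e = 0) {u : Eucl n} (hu : ‖u‖ = ‖e‖)
    {P : Set (Eucl n)} (hP : IsPolytopeO P) : Φ P u = 0 := by
  set g := (ℝ ∙ (u - e))ᗮ.reflection
  rw [← hΦ.apply_image_isometry g hP, Submodule.reflection_sub hu]
  exact he _ (hP.image g.toLinearEquiv.toLinearMap)

theorem eq_zero_of_forall_apply_eq_zero (hp : 0 < p) (hCp : MapsToCp p Φ)
    (hcov : IsGLCovariant Φ) {e : Eucl n} (he : ‖e‖ = 1)
    (h : ∀ Q : Set (Eucl n), IsPolytopeO Q → Φ Q e = 0) {P : Set (Eucl n)}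
    (hP : IsPolytopeO P) : Φ P = 0 := by
  funext w
  rcases eq_or_ne w 0 with rfl | hw
  · exact hCp.apply_zero hp hP
  have hnorm : ‖‖w‖⁻¹ • w‖ = ‖e‖ := by
    rw [norm_smul, norm_inv, norm_norm, inv_mul_cancel₀ (norm_ne_zero_iff.2 hw), he]
  calc Φ P w = Φ P (‖w‖ • ‖w‖⁻¹ • w) := by rw [smul_inv_smul₀ (norm_ne_zero_iff.2 hw)]
    _ = 0 := by
      rw [(hCp P hP).2 _ (norm_pos_iff.2 hw), hcov.apply_eq_zero_of_norm_eq h hnorm hP, mul_zero]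

/-- The flattening maps `stretch e b⁻¹ s` (`s → 0`) carry `Q` to `[0, e]` while only rescaling
`Φ Q u` by `b⁻¹ ^ p`. -/
lemma inv_rpow_mul_abs_apply_lt (hCp : MapsToCp p Φ) (hcov : IsGLCovariant Φ) {e : Eucl n}
    (he : ‖e‖ = 1) (hseg : Φ (segment ℝ 0 e) = 0) (hcont : ContinuousAtSegment Φ e)
    {Q : Set (Eucl n)} (hQ : IsPolytopeO Q) (hhalf : ∀ x ∈ Q, 0 ≤ ⟪e, x⟫) {xb : Eucl n}
    (hxb : xb ∈ Q) (hb : 0 < ⟪e, xb⟫) (hmax : IsMaxOn (fun x => ⟪e, x⟫) Q xb) {u : Eucl n}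
    (hu : ‖u‖ = 1) (hue : u ∈ ℝ ∙ e) {ε : ℝ} (hε : 0 < ε) :
    ⟪e, xb⟫⁻¹ ^ p * |Φ Q u| < ε := by
  set b := ⟪e, xb⟫
  obtain ⟨R, hR⟩ := hQ.1.isCompact.isBounded.exists_norm_le
  have hR0 : 0 ≤ R := (norm_nonneg _).trans (hR 0 hQ.2)
  obtain ⟨δ, hδ, hδε⟩ := hcont ε hε
  set s := δ / (2 * R + 1)
  have hs : 0 < s := by positivity
  have hbp : 0 < b⁻¹ ^ p := Real.rpow_pos_of_pos (inv_pos.2 hb) p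
  set ψ := stretch e b⁻¹ s
  have hψQ := hQ.image ψ
  have hdist : hausdorffDist (ψ '' Q) (segment ℝ 0 e) < δ := by
    refine (hausdorffDist_image_stretch_segment_le hQ.1.convex hQ.2 he hxb hb
      (fun x hx => ⟨hhalf x hx, hmax hx⟩) hs.le hR).trans_lt ?_
    rw [show 2 * s * R = δ * (2 * R) / (2 * R + 1) by ring, div_lt_iff₀ (by positivity)]
    nlinarith
  have hψu : ψ u = b⁻¹ • u := by
    obtain ⟨c, rfl⟩ := Submodule.mem_span_singleton.1 hue
    rw [map_smul, stretch_apply_self he, smul_comm]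
  have hcontψ : Continuous fun v => Φ (ψ '' Q) v - Φ (segment ℝ 0 e) v := by
    simpa [hseg] using (hCp _ hψQ).1
  calc b⁻¹ ^ p * |Φ Q u| = |Φ (ψ '' Q) u - Φ (segment ℝ 0 e) u| := by
        rw [hseg, Pi.zero_apply, sub_zero, hcov Q hQ ψ (det_stretch_ne_zero he (by positivity)
          hs.ne'), Function.comp_apply, stretch_isSymmetric.adjoint_eq, hψu,
          (hCp Q hQ).2 _ (inv_pos.2 hb), abs_mul, abs_of_pos hbp]
    _ ≤ sphSup fun v => Φ (ψ '' Q) v - Φ (segment ℝ 0 e) v := abs_le_sphSup hcontψ hu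
    _ < ε := hδε _ hψQ hdist

theorem apply_eq_zero_of_subset_halfSpace (hCp : MapsToCp p Φ) (hsimple : IsSimple Φ)
    (hcov : IsGLCovariant Φ) {e : Eucl n} (he : ‖e‖ = 1) (hseg : Φ (segment ℝ 0 e) = 0)
    (hcont : ContinuousAtSegment Φ e) {Q : Set (Eucl n)} (hQ : IsPolytopeO Q)
    (hhalf : ∀ x ∈ Q, 0 ≤ ⟪e, x⟫) {u : Eucl n} (hu : ‖u‖ = 1) (hue : u ∈ ℝ ∙ e) :
    Φ Q u = 0 := by
  obtain ⟨xb, hxb, hmax⟩ := hQ.1.isCompact.exists_isMaxOn ⟨0, hQ.2⟩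
    (f := fun x => ⟪e, x⟫) (continuous_const.inner continuous_id).continuousOn
  rcases (hhalf xb hxb).eq_or_lt with hb | hb
  · have hflat : Q ⊆ (ℝ ∙ e)ᗮ := fun x hx =>
      Submodule.mem_orthogonal_singleton_iff_inner_right.2
        (le_antisymm (hb ▸ hmax hx) (hhalf x hx))
    have he0 : e ≠ 0 := by rintro rfl; simp at he
    rw [hsimple Q hQ (setDim_lt_of_subset_orthogonal he0 hflat)]
    rfl
  have hbp : 0 < ⟪e, xb⟫⁻¹ ^ p := Real.rpow_pos_of_pos (inv_pos.2 hb) p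
  by_contra hne
  exact (inv_rpow_mul_abs_apply_lt hCp hcov he hseg hcont hQ hhalf hxb hb hmax hu hue
    (mul_pos hbp (abs_pos.2 hne))).false

theorem apply_self_eq_zero (hCp : MapsToCp p Φ)
    (hval : ∀ K L : Set (Eucl n), IsPolytopeO K → IsPolytopeO L → IsPolytopeO (K ∪ L) →
      Φ (K ∪ L) + Φ (K ∩ L) = Φ K + Φ L)
    (hsimple : IsSimple Φ) (hcov : IsGLCovariant Φ) {e : Eucl n} (he : ‖e‖ = 1)
    (hseg : Φ (segment ℝ 0 e) = 0) (hcont : ContinuousAtSegment Φ e) {Q : Set (Eucl n)}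
    (hQ : IsPolytopeO Q) : Φ Q e = 0 := by
  have he0 : e ≠ 0 := by rintro rfl; simp at he
  set Qpos := Q ∩ {x | 0 ≤ ⟪e, x⟫}
  set Qneg := Q ∩ {x | 0 ≤ ⟪-e, x⟫}
  have hQpos : IsPolytopeO Qpos := hQ.inter_halfSpace e
  have hQneg : IsPolytopeO Qneg := hQ.inter_halfSpace (-e)
  have hunion : Qpos ∪ Qneg = Q := by
    ext x
    simp only [Qpos, Qneg, mem_union, mem_inter_iff, mem_ofPred_eq, inner_neg_left, neg_nonneg]
    constructor
    · rintro (⟨hx, -⟩ | ⟨hx, -⟩) <;> exact hx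
    · intro hx
      exact (le_total 0 ⟪e, x⟫).imp (⟨hx, ·⟩) (⟨hx, ·⟩)
  have hinter : Φ (Qpos ∩ Qneg) = 0 := by
    have hcap : Qpos ∩ Qneg = Qpos ∩ {x | 0 ≤ ⟪-e, x⟫} := by
      ext x
      simp only [Qpos, Qneg, mem_inter_iff]
      tauto
    refine hsimple _ (hcap ▸ hQpos.inter_halfSpace (-e))
      (setDim_lt_of_subset_orthogonal he0 ?_)
    rintro x ⟨⟨-, hxpos⟩, -, hxneg⟩
    simp only [mem_ofPred_eq, inner_neg_left, neg_nonneg] at hxpos hxneg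
    exact Submodule.mem_orthogonal_singleton_iff_inner_right.2 (le_antisymm hxneg hxpos)
  have hQpose : Φ Qpos e = 0 :=
    apply_eq_zero_of_subset_halfSpace hCp hsimple hcov he hseg hcont hQpos (fun x hx => hx.2) he
      (Submodule.mem_span_singleton_self e)
  have hQnege : Φ Qneg e = 0 := by
    set g := LinearIsometryEquiv.neg ℝ (E := Eucl n)
    rw [← hcov.apply_image_isometry g hQneg e]
    refine apply_eq_zero_of_subset_halfSpace hCp hsimple hcov he hseg hcont
      (hQneg.image g.toLinearEquiv.toLinearMap) ?_ (by simp [g, he])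
      (by simp [g])
    rintro _ ⟨x, ⟨-, hx⟩, rfl⟩
    simpa [g] using hx
  have h := congrFun (hval Qpos Qneg hQpos hQneg (hunion ▸ hQ)) e
  rwa [hunion, hinter, Pi.add_apply, Pi.add_apply, Pi.zero_apply, add_zero, hQpose, hQnege,
    add_zero] at h

end Valuations

/-- For `n ≥ 2`, every simple `GL(n)`-covariant valuation
`Φ : 𝒫ⁿ_o → C_p(ℝⁿ)` that is continuous at the line segment `[o, e₁]` vanishes. -/
theorem statement_11 (n : ℕ) (hn : 2 ≤ n) (p : ℝ) (hp : 1 < p)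
    (Φ : Set (Eucl n) → Eucl n → ℝ)
    (hCp : ∀ P : Set (Eucl n), IsPolytopeO P → Continuous (Φ P) ∧
      ∀ s : ℝ, 0 < s → ∀ u : Eucl n, Φ P (s • u) = s ^ p * Φ P u)
    (hval : ∀ K L : Set (Eucl n), IsPolytopeO K → IsPolytopeO L → IsPolytopeO (K ∪ L) →
      Φ (K ∪ L) + Φ (K ∩ L) = Φ K + Φ L)
    (hsimple : ∀ P : Set (Eucl n), IsPolytopeO P → setDim P < n → Φ P = 0)
    (hcov : ∀ P : Set (Eucl n), IsPolytopeO P →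
      ∀ φ : Eucl n →ₗ[ℝ] Eucl n, LinearMap.det φ ≠ 0 →
        Φ (φ '' P) = Φ P ∘ LinearMap.adjoint φ)
    (hcont : ∀ ε > (0:ℝ), ∃ δ > (0:ℝ), ∀ P : Set (Eucl n), IsPolytopeO P →
      hausdorffDist P
        (segment ℝ (0 : Eucl n) (EuclideanSpace.single (⟨0, by omega⟩ : Fin n) (1:ℝ))) < δ →
      sphSup (fun u => Φ P u -
        Φ (segment ℝ (0 : Eucl n) (EuclideanSpace.single (⟨0, by omega⟩ : Fin n) (1:ℝ))) u)
        < ε) :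
    ∀ P : Set (Eucl n), IsPolytopeO P → Φ P = 0 := by
  set e : Eucl n := EuclideanSpace.single ⟨0, by omega⟩ 1
  have he : ‖e‖ = 1 := by simp [e]
  have hseg : Φ (segment ℝ 0 e) = 0 :=
    hsimple _ (isPolytopeO_segment e) (setDim_segment_lt hn e)
  intro P hP
  exact eq_zero_of_forall_apply_eq_zero (by linarith) hCp hcov he
    (fun Q hQ => apply_self_eq_zero hCp hval hsimple hcov he hseg hcont hQ) hP
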